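/- The graded nilHecke ring NH_m contains the element e_m = x₁^{m−1} x₂^{m−2} ⋯ x_{m−1} ∂_{w₀}, where w₀ is the longest element of S_m and ∂_{w₀} is the corresponding product of divided difference operators; e_m is an idempotent: e_m² = e_m. -/

import Mathlib

/-!
Every `∂_a` annihilates `∂_{w₀}`: writing `w₀ = (s₀)(s₁s₀)(s₂s₁s₀)⋯`, this follows
from the nil-Coxeter relations `∂_a² = 0`, `∂_a∂_b = ∂_b∂_a` for `|a - b| ≥ 2` and the braid
relation alone. Hence `∂_{w₀} f` is symmetric, and `∂_{w₀}` is linear over symmetric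
polynomials. Together with `∂_{w₀} x^δ = 1` for `x^δ = x₁^{m-1} ⋯ x_{m-1}` this gives
`e_m² f = x^δ ∂_{w₀}(x^δ · ∂_{w₀} f) = x^δ ∂_{w₀}(x^δ) · ∂_{w₀} f = e_m f`.
-/

open MvPolynomial

/-- A reduced word for the longest element w₀ of S_m (0-indexed simple reflections):
(s₀)(s₁s₀)(s₂s₁s₀)⋯ . -/
def longestWord (m : ℕ) : List ℕ := (List.range m).flatMap fun k => (List.range k).reverse

section NilCoxeter

variable {M : Type*} [MonoidWithZero M]

/-- The defining relations of the nil-Coxeter algebra of `S_n`, with `d a` standing for `∂_{s_a}`,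
`a + 1 < n`. -/
structure IsNilCoxeter (d : ℕ → M) (n : ℕ) : Prop where
  mul_self : ∀ a, a + 1 < n → d a * d a = 0
  comm : ∀ a b, a + 2 ≤ b → b + 1 < n → d a * d b = d b * d a
  braid : ∀ a, a + 2 < n → d a * d (a + 1) * d a = d (a + 1) * d a * d (a + 1)

/-- `d (k - 1) * ⋯ * d 0`, the block by which `longestWord (k + 1)` extends `longestWord k`. -/
def cycleProd (d : ℕ → M) (k : ℕ) : M := ((List.range k).reverse.map d).prod

variable {d : ℕ → M} {n : ℕ}

lemma cycleProd_zero : cycleProd d 0 = 1 := rfl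

lemma cycleProd_succ (k : ℕ) : cycleProd d (k + 1) = d k * cycleProd d k := by
  simp [cycleProd, List.range_succ]

lemma prod_map_longestWord_succ (k : ℕ) :
    ((longestWord (k + 1)).map d).prod = ((longestWord k).map d).prod * cycleProd d k := by
  simp [longestWord, List.range_succ, cycleProd]

namespace IsNilCoxeter

variable (h : IsNilCoxeter d n)
include h

lemma commute_cycleProd {a j : ℕ} (ha : a + 1 < n) (hj : j < a) :
    Commute (d a) (cycleProd d j) := by
  induction j with
  | zero => exact Commute.one_right _
  | succ k ih =>
    rw [cycleProd_succ]
    exact Commute.mul_right (h.comm k a (by omega) ha).symm (ih (by omega))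

lemma mul_cycleProd {a j : ℕ} (hj : a + 2 ≤ j) (hn : j < n) :
    d a * cycleProd d j = cycleProd d j * d (a + 1) := by
  induction j with
  | zero => omega
  | succ k ih =>
    rcases (show a + 2 ≤ k ∨ k = a + 1 by omega) with hk | rfl
    · rw [cycleProd_succ, ← mul_assoc, h.comm a k hk hn, mul_assoc, ih hk (by omega), mul_assoc]
    · rw [cycleProd_succ, cycleProd_succ, ← mul_assoc, ← mul_assoc, h.braid a hn, mul_assoc,
        mul_assoc, (h.commute_cycleProd (a := a + 1) hn (by omega)).eq]
      simp only [mul_assoc]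

lemma cycleProd_mul_self {j : ℕ} (hj : 1 ≤ j) (hn : j < n) :
    cycleProd d j * cycleProd d j = 0 := by
  induction j with
  | zero => omega
  | succ k ih =>
    rcases k with _ | k
    · rw [cycleProd_succ, cycleProd_zero, mul_one, h.mul_self 0 hn]
    · calc cycleProd d (k + 2) * cycleProd d (k + 2)
          = cycleProd d (k + 2) * d (k + 1) * cycleProd d (k + 1) := by
            rw [mul_assoc, ← cycleProd_succ]
        _ = d k * (d (k + 1) * (cycleProd d (k + 1) * cycleProd d (k + 1))) := by
            rw [← h.mul_cycleProd le_rfl hn, cycleProd_succ]; simp only [mul_assoc]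
        _ = 0 := by rw [ih (by omega) (by omega), mul_zero, mul_zero]

lemma commute_prod_map_longestWord {a k : ℕ} (ha : a + 1 < n) (hk : k ≤ a) :
    Commute (d a) ((longestWord k).map d).prod := by
  induction k with
  | zero => exact Commute.one_right _
  | succ k ih =>
    rw [prod_map_longestWord_succ]
    exact (ih (by omega)).mul_right (h.commute_cycleProd ha (by omega))

lemma mul_prod_map_longestWord_of_le {a k : ℕ} (hk : a + 2 ≤ k) (hn : k ≤ n) :
    d a * ((longestWord k).map d).prod = 0 := by
  induction k with
  | zero => omega
  | succ k ih =>
    rcases (show a + 2 ≤ k ∨ k = a + 1 by omega) with hk | rfl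
    · rw [prod_map_longestWord_succ, ← mul_assoc, ih hk (by omega), zero_mul]
    · rw [prod_map_longestWord_succ, prod_map_longestWord_succ, ← mul_assoc, ← mul_assoc,
        (h.commute_prod_map_longestWord (a := a) (by omega) le_rfl).eq, mul_assoc _ (d a),
        ← cycleProd_succ, mul_assoc, h.cycleProd_mul_self (by omega) (by omega), mul_zero]

lemma mul_prod_map_longestWord {a : ℕ} (ha : a + 1 < n) :
    d a * ((longestWord n).map d).prod = 0 :=
  h.mul_prod_map_longestWord_of_le ha le_rfl

end IsNilCoxeter

end NilCoxeter

section DividedDifference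

variable {σ R : Type*} [CommRing R]

lemma rename_perm_rename_perm (e e' : Equiv.Perm σ) (f : MvPolynomial σ R) :
    rename e (rename e' f) = rename (e * e') f := by
  rw [rename_rename, Equiv.Perm.coe_mul]

lemma X_sub_X_ne_zero [Nontrivial R] {i j : σ} (hij : i ≠ j) :
    (X i - X j : MvPolynomial σ R) ≠ 0 :=
  sub_ne_zero.mpr fun h => hij (X_injective h)

variable [DecidableEq σ]

lemma rename_swap_rename_swap (i j : σ) (f : MvPolynomial σ R) :
    rename (Equiv.swap i j) (rename (Equiv.swap i j) f) = f := by
  rw [rename_perm_rename_perm, Equiv.swap_mul_self, Equiv.Perm.coe_one, rename_id_apply]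

def IsDividedDifference (i j : σ) (δ : MvPolynomial σ R → MvPolynomial σ R) : Prop :=
  ∀ f, (X i - X j) * δ f = f - rename (Equiv.swap i j) f

namespace IsDividedDifference

variable {i j k l : σ} {δ ε : MvPolynomial σ R → MvPolynomial σ R}

lemma rename_swap_eq_of_apply_eq_zero (hδ : IsDividedDifference i j δ) {g : MvPolynomial σ R}
    (hg : δ g = 0) : rename (Equiv.swap i j) g = g := by
  have := hδ g
  rw [hg, mul_zero, eq_comm, sub_eq_zero] at this
  exact this.symm

lemma neg (hδ : IsDividedDifference i j δ) : IsDividedDifference j i (-δ) := fun f => by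
  rw [Pi.neg_apply, Equiv.swap_comm, ← hδ f]; ring

lemma mul_mul_apply_apply (hδ : IsDividedDifference i j δ) (hε : IsDividedDifference k l ε)
    (hik : i ≠ k) (hil : i ≠ l) (hjk : j ≠ k) (hjl : j ≠ l) (f : MvPolynomial σ R) :
    (X i - X j) * (X k - X l) * δ (ε f)
      = f - rename (Equiv.swap i j) f - rename (Equiv.swap k l) f
        + rename (Equiv.swap i j) (rename (Equiv.swap k l) f) := by
  have hs := congrArg (rename (Equiv.swap i j)) (hε f)
  simp only [map_mul, map_sub, rename_X, Equiv.swap_apply_of_ne_of_ne hik.symm hjk.symm,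
    Equiv.swap_apply_of_ne_of_ne hil.symm hjl.symm] at hs
  linear_combination (X k - X l) * hδ (ε f) + hε f - hs

variable [IsDomain R]

lemma apply_eq_iff (hδ : IsDividedDifference i j δ) (hij : i ≠ j) {f g : MvPolynomial σ R} :
    δ f = g ↔ (X i - X j) * g = f - rename (Equiv.swap i j) f := by
  rw [← hδ f, mul_right_inj' (X_sub_X_ne_zero hij), eq_comm]

lemma map_neg (hδ : IsDividedDifference i j δ) (hij : i ≠ j) (f : MvPolynomial σ R) :
    δ (-f) = -δ f := by
  rw [hδ.apply_eq_iff hij, mul_neg, hδ f, _root_.map_neg]; ring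

lemma rename_swap_apply (hδ : IsDividedDifference i j δ) (hij : i ≠ j) (f : MvPolynomial σ R) :
    rename (Equiv.swap i j) (δ f) = δ f := by
  symm
  rw [hδ.apply_eq_iff hij]
  have := congrArg (rename (Equiv.swap i j)) (hδ f)
  simp only [map_mul, map_sub, rename_X, Equiv.swap_apply_left, Equiv.swap_apply_right,
    rename_swap_rename_swap] at this
  linear_combination -this

lemma apply_apply (hδ : IsDividedDifference i j δ) (hij : i ≠ j) (f : MvPolynomial σ R) :
    δ (δ f) = 0 := by
  rw [hδ.apply_eq_iff hij, mul_zero, hδ.rename_swap_apply hij, sub_self]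

lemma apply_mul_of_rename_swap_eq (hδ : IsDividedDifference i j δ) (hij : i ≠ j)
    {g : MvPolynomial σ R} (hg : rename (Equiv.swap i j) g = g) (f : MvPolynomial σ R) :
    δ (g * f) = g * δ f := by
  rw [hδ.apply_eq_iff hij, map_mul, hg, mul_left_comm, hδ f, mul_sub]

lemma apply_mul_X_of_rename_swap_eq (hδ : IsDividedDifference i j δ) (hij : i ≠ j)
    {g : MvPolynomial σ R} (hg : rename (Equiv.swap i j) g = g) :
    δ (g * X i) = g := by
  rw [hδ.apply_eq_iff hij, map_mul, hg, rename_X, Equiv.swap_apply_left]; ring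

lemma comm (hδ : IsDividedDifference i j δ) (hε : IsDividedDifference k l ε)
    (hij : i ≠ j) (hkl : k ≠ l) (hik : i ≠ k) (hil : i ≠ l) (hjk : j ≠ k) (hjl : j ≠ l)
    (f : MvPolynomial σ R) : δ (ε f) = ε (δ f) := by
  have hswap : Equiv.swap i j * Equiv.swap k l = Equiv.swap k l * Equiv.swap i j := by
    rw [Equiv.mul_swap_eq_swap_mul, Equiv.swap_apply_of_ne_of_ne hik.symm hjk.symm,
      Equiv.swap_apply_of_ne_of_ne hil.symm hjl.symm]
  apply mul_left_cancel₀ (mul_ne_zero (X_sub_X_ne_zero hij) (X_sub_X_ne_zero hkl))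
  rw [hδ.mul_mul_apply_apply hε hik hil hjk hjl, mul_comm (X i - X j),
    hε.mul_mul_apply_apply hδ hik.symm hjk.symm hil.symm hjl.symm,
    rename_perm_rename_perm, rename_perm_rename_perm, hswap]
  ring

lemma mul_mul_mul_apply_apply_apply (hδ : IsDividedDifference i j δ)
    (hε : IsDividedDifference j k ε) (hij : i ≠ j) (hjk : j ≠ k) (hik : i ≠ k)
    (f : MvPolynomial σ R) :
    (X i - X j) * (X j - X k) * (X i - X k) * δ (ε (δ f))
      = f - rename (Equiv.swap i j) f - rename (Equiv.swap j k) f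
        + rename (Equiv.swap j k * Equiv.swap i j) f + rename (Equiv.swap i j * Equiv.swap j k) f
        - rename (Equiv.swap i j * Equiv.swap j k * Equiv.swap i j) f := by
  have hε_s := congrArg (rename (Equiv.swap i j)) (hε (δ f))
  have hδ_t := congrArg (rename (Equiv.swap j k)) (hδ f)
  have hδ_st := congrArg (rename (Equiv.swap i j)) hδ_t
  simp only [map_mul, map_sub, rename_X, Equiv.swap_apply_left, Equiv.swap_apply_right,
    Equiv.swap_apply_of_ne_of_ne hik.symm hjk.symm, Equiv.swap_apply_of_ne_of_ne hij hik,
    hδ.rename_swap_apply hij] at hε_s hδ_t hδ_st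
  simp only [← rename_perm_rename_perm]
  linear_combination (X j - X k) * (X i - X k) * hδ (ε (δ f)) + (X i - X k) * hε (δ f)
    - (X j - X k) * hε_s + hδ f - hδ_t + hδ_st

lemma braid (hδ : IsDividedDifference i j δ) (hε : IsDividedDifference j k ε)
    (hij : i ≠ j) (hjk : j ≠ k) (hik : i ≠ k) (f : MvPolynomial σ R) :
    δ (ε (δ f)) = ε (δ (ε f)) := by
  -- times the Vandermonde of `X i, X j, X k`, both sides are the alternating sum of `f` over `S₃`
  have hsts : Equiv.swap i j * Equiv.swap j k * Equiv.swap i j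
      = Equiv.swap j k * Equiv.swap i j * Equiv.swap j k := by
    rw [Equiv.swap_comm i j, Equiv.swap_comm j k, Equiv.swap_mul_swap_mul_swap hjk.symm hik.symm,
      Equiv.swap_comm k j, Equiv.swap_comm j i, Equiv.swap_mul_swap_mul_swap hij hik,
      Equiv.swap_comm]
  have hA := hδ.mul_mul_mul_apply_apply_apply hε hij hjk hik f
  have hB := hε.neg.mul_mul_mul_apply_apply_apply hδ.neg hjk.symm hij.symm hik.symm f
  simp only [Pi.neg_apply, hδ.map_neg hij, neg_neg, Equiv.swap_comm k j,
    Equiv.swap_comm j i] at hB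
  rw [hsts] at hA
  apply mul_left_cancel₀ (mul_ne_zero (mul_ne_zero (X_sub_X_ne_zero hij) (X_sub_X_ne_zero hjk))
    (X_sub_X_ne_zero hik))
  linear_combination hA - hB

end IsDividedDifference

end DividedDifference

section Staircase

variable {R : Type*} [CommRing R]

lemma rename_prod_X_pow {ι : Type*} [Fintype ι] (e : Equiv.Perm ι) (x : ι → ℕ) :
    rename e (∏ a, X a ^ x a : MvPolynomial ι R) = ∏ a, X a ^ x (e.symm a) := by
  simp only [map_prod, map_pow, rename_X]
  exact Fintype.prod_equiv e _ _ fun a => by rw [Equiv.symm_apply_apply]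

lemma rename_swap_prod_X_pow {ι : Type*} [Fintype ι] [DecidableEq ι] {i j : ι} {x : ι → ℕ}
    (hx : x i = x j) :
    rename (Equiv.swap i j) (∏ a, X a ^ x a : MvPolynomial ι R) = ∏ a, X a ^ x a := by
  rw [rename_prod_X_pow, Equiv.symm_swap]
  congr! 2 with a
  rcases eq_or_ne a i with rfl | hai
  · rw [Equiv.swap_apply_left, hx]
  rcases eq_or_ne a j with rfl | haj
  · rw [Equiv.swap_apply_right, hx]
  rw [Equiv.swap_apply_of_ne_of_ne hai haj]

lemma prod_X_pow_add_single {ι : Type*} [Fintype ι] [DecidableEq ι] (x : ι → ℕ) (i : ι) :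
    (∏ a, X a ^ (x + Pi.single i 1 : ι → ℕ) a : MvPolynomial ι R)
      = (∏ a, X a ^ x a) * X i := by
  simp only [Pi.add_apply, pow_add, Finset.prod_mul_distrib]
  congr 1
  rw [Fintype.prod_eq_single i fun a ha => by rw [Pi.single_eq_of_ne ha, pow_zero]]
  rw [Pi.single_eq_same, pow_one]

end Staircase

lemma lt_of_mem_longestWord {m b : ℕ} (hb : b ∈ longestWord m) : b + 1 < m := by
  simp only [longestWord, List.mem_flatMap, List.mem_range, List.mem_reverse] at hb
  omega

section AdjacentDividedDifferences

variable {R : Type*} [CommRing R] [IsDomain R] {m : ℕ}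

def IsDividedDifferenceFamily (D : ℕ → Module.End R (MvPolynomial (Fin m) R)) : Prop :=
  ∀ a (h : a + 1 < m), IsDividedDifference (⟨a, by omega⟩ : Fin m) ⟨a + 1, h⟩ (D a)

noncomputable def stair (n : ℕ) : MvPolynomial (Fin m) R :=
  ∏ a : Fin m, X a ^ (n - 1 - (a : ℕ))

/-- The exponents of `∂_{k-1} ⋯ ∂_0 (stair (j + 1))`. -/
def stairExp (j k : ℕ) (a : Fin m) : ℕ := if (a : ℕ) < k then j - 1 - a else j - a

namespace IsDividedDifferenceFamily

variable {D : ℕ → Module.End R (MvPolynomial (Fin m) R)} (hD : IsDividedDifferenceFamily D)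
include hD

lemma isNilCoxeter : IsNilCoxeter D m := by
  refine ⟨fun a h => LinearMap.ext fun f => (hD a h).apply_apply ?_ f,
    fun a b hab hb => LinearMap.ext fun f =>
      (hD a (by omega)).comm (hD b hb) ?_ ?_ ?_ ?_ ?_ ?_ f,
    fun a h => LinearMap.ext fun f => (hD a (by omega)).braid (hD (a + 1) h) ?_ ?_ ?_ f⟩
  all_goals rw [Ne, Fin.mk.injEq]; omega

lemma apply_stairExp {j k : ℕ} (hk : k < j) (hkm : k + 1 < m) :
    D k (∏ a, X a ^ stairExp j k a) = ∏ a : Fin m, X a ^ stairExp j (k + 1) a := by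
  have hsplit : stairExp j k = stairExp (m := m) j (k + 1) + Pi.single ⟨k, by omega⟩ 1 := by
    funext a
    simp only [stairExp, Pi.add_apply, Pi.single_apply, Fin.ext_iff]
    split_ifs <;> omega
  rw [hsplit, prod_X_pow_add_single]
  exact (hD k hkm).apply_mul_X_of_rename_swap_eq (by rw [Ne, Fin.mk.injEq]; omega)
    (rename_swap_prod_X_pow (by simp [stairExp]; omega))

lemma cycleProd_apply_stair {j : ℕ} (hj : j < m) :
    cycleProd D j (stair (j + 1)) = stair j := by
  have hstep : ∀ k ≤ j,
      cycleProd D k (∏ a, X a ^ stairExp j 0 a) = ∏ a, X a ^ stairExp j k a := by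
    intro k hk
    induction k with
    | zero => rfl
    | succ k ih =>
      rw [cycleProd_succ, Module.End.mul_apply, ih (by omega),
        hD.apply_stairExp (by omega) (by omega)]
  have hfirst : (stair (j + 1) : MvPolynomial (Fin m) R) = ∏ a, X a ^ stairExp j 0 a := by
    simp [stair, stairExp]
  have hlast : (stair j : MvPolynomial (Fin m) R) = ∏ a, X a ^ stairExp j j a := by
    unfold stair
    congr! 2 with a
    simp only [stairExp]
    split_ifs <;> omega
  rw [hfirst, hlast, hstep j le_rfl]

lemma prod_map_longestWord_apply_stair {n : ℕ} (hn : n ≤ m) :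
    ((longestWord n).map D).prod (stair n) = 1 := by
  induction n with
  | zero => simp [longestWord, stair]
  | succ n ih =>
    rw [prod_map_longestWord_succ, Module.End.mul_apply, hD.cycleProd_apply_stair (by omega),
      ih (by omega)]

lemma rename_swap_prod_map_longestWord_apply {a : ℕ} (ha : a + 1 < m)
    (f : MvPolynomial (Fin m) R) :
    rename (Equiv.swap ⟨a, by omega⟩ ⟨a + 1, ha⟩) (((longestWord m).map D).prod f)
      = ((longestWord m).map D).prod f :=
  (hD a ha).rename_swap_eq_of_apply_eq_zero <| by
    rw [← Module.End.mul_apply, hD.isNilCoxeter.mul_prod_map_longestWord ha, LinearMap.zero_apply]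

lemma prod_map_apply_mul {l : List ℕ} (hl : ∀ b ∈ l, b + 1 < m) {g : MvPolynomial (Fin m) R}
    (hg : ∀ a (ha : a + 1 < m), rename (Equiv.swap ⟨a, by omega⟩ ⟨a + 1, ha⟩) g = g)
    (f : MvPolynomial (Fin m) R) :
    (l.map D).prod (g * f) = g * (l.map D).prod f := by
  induction l with
  | nil => rfl
  | cons b l ih =>
    have hb := hl b List.mem_cons_self
    simp only [List.map_cons, List.prod_cons, Module.End.mul_apply]
    rw [ih fun c hc => hl c (List.mem_cons_of_mem b hc),
      (hD b hb).apply_mul_of_rename_swap_eq (by rw [Ne, Fin.mk.injEq]; omega) (hg b hb)]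

end IsDividedDifferenceFamily

end AdjacentDividedDifferences

/-- in the nilHecke ring NH_m (acting on ℤ[x₁,...,x_m]), the element
e_m = x₁^{m−1} x₂^{m−2} ⋯ x_{m−1} ∂_{w₀} is an idempotent, e_m² = e_m.
Here `D a` is the divided difference operator ∂_{a+1} (0-indexed: at the pair
x_a, x_{a+1}), characterized by `(x_a - x_{a+1}) * ∂_a f = f - s_a f`, and
∂_{w₀} is the composite of divided differences along a reduced word of the
longest permutation w₀ ∈ S_m. -/
theorem nilHecke_em_idempotent (m : ℕ)
    (D : ℕ → Module.End ℤ (MvPolynomial (Fin m) ℤ))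
    (hD : ∀ (a : ℕ) (h : a + 1 < m) (f : MvPolynomial (Fin m) ℤ),
      (X (⟨a, Nat.lt_of_succ_lt h⟩ : Fin m) - X ⟨a + 1, h⟩) * D a f
        = f - rename (Equiv.swap (⟨a, Nat.lt_of_succ_lt h⟩ : Fin m) ⟨a + 1, h⟩) f) :
    let dw0 : Module.End ℤ (MvPolynomial (Fin m) ℤ) := ((longestWord m).map D).prod
    let xmon : MvPolynomial (Fin m) ℤ := ∏ a : Fin m, X a ^ (m - 1 - (a : ℕ))
    let em : Module.End ℤ (MvPolynomial (Fin m) ℤ) :=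
      (LinearMap.mulLeft ℤ xmon : Module.End ℤ (MvPolynomial (Fin m) ℤ)) * dw0
    em * em = em := by
  intro dw0 xmon em
  have hfam : IsDividedDifferenceFamily D := hD
  refine LinearMap.ext fun f => ?_
  change xmon * dw0 (xmon * dw0 f) = xmon * dw0 f
  congr 1
  rw [mul_comm, hfam.prod_map_apply_mul (fun _ => lt_of_mem_longestWord)
    (fun _ ha => hfam.rename_swap_prod_map_longestWord_apply ha f)]
  show dw0 f * dw0 (stair m) = dw0 f
  rw [hfam.prod_map_longestWord_apply_stair le_rfl, mul_one]
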